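/- Let f, g : ℝⁿ → ℝ with f differentiable, and suppose for all x satisfying P the Lie derivative of f along e at x is ≥ g(x)·f(x), with t ↦ g(γ(t)) continuous on [0,T]. Then for any differentiable solution γ : [0,T] → ℝⁿ of ẋ = e staying in P with f(γ(0)) ≥ 0, we have f(γ(t)) ≥ 0 for all t ∈ [0,T]. -/

import Mathlib

/-! Along the solution, `h = f ∘ γ` satisfies `h' ≥ (g ∘ γ) h`, so `h · exp (-∫₀ᵗ g ∘ γ)` has
nonnegative derivative and is monotone. Hence `h t ≥ h 0 · exp (∫₀ᵗ g ∘ γ) ≥ 0`. -/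

open InnerProductSpace Set Real intervalIntegral

theorem HasGradientAt.comp_hasDerivAt {F : Type*} [NormedAddCommGroup F] [InnerProductSpace ℝ F]
    [CompleteSpace F] {f : F → ℝ} {f' : F} {γ : ℝ → F} {γ' : F} {t : ℝ}
    (hf : HasGradientAt f f' (γ t)) (hγ : HasDerivAt γ γ' t) :
    HasDerivAt (f ∘ γ) ⟪f', γ'⟫_ℝ t := by
  simpa using hf.hasFDerivAt.comp_hasDerivAt t hγ

theorem ContinuousOn.hasDerivAt_integral_of_mem_Ioo {c : ℝ → ℝ} {a b t : ℝ}
    (hc : ContinuousOn c (Icc a b)) (ht : t ∈ Ioo a b) :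
    HasDerivAt (fun u => ∫ s in a..u, c s) (c t) t := by
  have hnhds : Icc a b ∈ nhds t := Icc_mem_nhds ht.1 ht.2
  refine integral_hasDerivAt_right ?_
    ⟨Icc a b, hnhds, hc.aestronglyMeasurable measurableSet_Icc⟩ (hc.continuousAt hnhds)
  exact (hc.mono (Icc_subset_Icc_right ht.2.le)).intervalIntegrable_of_Icc ht.1.le

section Darboux

variable {h h' c : ℝ → ℝ} {a b : ℝ}

theorem monotoneOn_mul_exp_neg_integral (hab : a ≤ b) (hh : ContinuousOn h (Icc a b))
    (hh' : ∀ t ∈ Ioo a b, HasDerivAt h (h' t) t) (hc : ContinuousOn c (Icc a b))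
    (hle : ∀ t ∈ Ioo a b, c t * h t ≤ h' t) :
    MonotoneOn (fun t => h t * exp (-∫ s in a..t, c s)) (Icc a b) := by
  have hG : ContinuousOn (fun t => ∫ s in a..t, c s) (Icc a b) := by
    rw [← uIcc_of_le hab] at hc ⊢
    exact continuousOn_primitive_interval hc.integrableOn_uIcc
  refine monotoneOn_of_hasDerivWithinAt_nonneg (convex_Icc a b) (hh.mul hG.neg.rexp)
    (f' := fun t => (h' t - c t * h t) * exp (-∫ s in a..t, c s)) ?_ ?_ <;>
    rw [interior_Icc] <;> intro t ht
  · have := (hh' t ht).mul (hc.hasDerivAt_integral_of_mem_Ioo ht).fun_neg.exp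
    exact (this.congr_deriv (by ring)).hasDerivWithinAt
  · exact mul_nonneg (sub_nonneg.2 (hle t ht)) (exp_pos _).le

theorem mul_exp_integral_le_of_mul_le_deriv (hab : a ≤ b) (hh : ContinuousOn h (Icc a b))
    (hh' : ∀ t ∈ Ioo a b, HasDerivAt h (h' t) t) (hc : ContinuousOn c (Icc a b))
    (hle : ∀ t ∈ Ioo a b, c t * h t ≤ h' t) {t : ℝ} (ht : t ∈ Icc a b) :
    h a * exp (∫ s in a..t, c s) ≤ h t := by
  have hmono := monotoneOn_mul_exp_neg_integral hab hh hh' hc hle (left_mem_Icc.2 hab) ht ht.1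
  simp only [integral_same, neg_zero, exp_zero, mul_one] at hmono
  calc h a * exp (∫ s in a..t, c s)
      ≤ h t * exp (-∫ s in a..t, c s) * exp (∫ s in a..t, c s) := by gcongr
    _ = h t := by rw [mul_assoc, ← exp_add, neg_add_cancel, exp_zero, mul_one]

end Darboux

/-- Soundness of the Darboux inequality rule (dbx≽). -/
theorem dbx_ge {n : ℕ} (e : EuclideanSpace ℝ (Fin n) → EuclideanSpace ℝ (Fin n))
    (f g : EuclideanSpace ℝ (Fin n) → ℝ) (P : EuclideanSpace ℝ (Fin n) → Prop)
    (γ : ℝ → EuclideanSpace ℝ (Fin n)) (T : ℝ) (hT : 0 ≤ T)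
    (hf : Differentiable ℝ f)
    (hlie : ∀ x, P x → ⟪gradient f x, e x⟫_ℝ ≥ g x * f x)
    (hg : ContinuousOn (fun t => g (γ t)) (Set.Icc (0:ℝ) T))
    (hγ : ∀ t ∈ Set.Icc (0:ℝ) T, HasDerivAt γ (e (γ t)) t)
    (hP : ∀ t ∈ Set.Icc (0:ℝ) T, P (γ t))
    (h0 : f (γ 0) ≥ 0) :
    ∀ t ∈ Set.Icc (0:ℝ) T, f (γ t) ≥ 0 := by
  intro t ht
  have hderiv (s : ℝ) (hs : s ∈ Icc 0 T) :
      HasDerivAt (f ∘ γ) ⟪gradient f (γ s), e (γ s)⟫_ℝ s :=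
    (hf (γ s)).hasGradientAt.comp_hasDerivAt (hγ s hs)
  have hdarboux := mul_exp_integral_le_of_mul_le_deriv hT
    (fun s hs => (hderiv s hs).continuousAt.continuousWithinAt)
    (fun s hs => hderiv s (Ioo_subset_Icc_self hs)) hg
    (fun s hs => hlie _ (hP s (Ioo_subset_Icc_self hs))) ht
  exact (mul_nonneg h0 (exp_pos _).le).trans hdarboux
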